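/- arXiv:quant-ph/0506089 — 5 statements merged into one kernel-verified Lean document; each statement's English description precedes it below -/
import Mathlib

section
/- Let H and H' be subspaces of sl_n(ℂ) consisting of all traceless matrices diagonal in orthonormal bases B and B' of ℂ^n respectively, where B and B' are mutually unbiased. Then H and H' are orthogonal with respect to the trace form: tr(AB) = 0 for all A ∈ H, B ∈ H'. -/
open Matrix BigOperators

/-- The set of traceless matrices diagonal in the orthonormal basis `ψ`,
i.e. matrices of the form Σᵢ aᵢ |ψᵢ⟩⟨ψᵢ| with Σᵢ aᵢ = 0. -/
def diagClass (n : ℕ) (ψ : Fin n → Fin n → ℂ) : Set (Matrix (Fin n) (Fin n) ℂ) :=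
  {A | ∃ a : Fin n → ℂ, ∑ i, a i = 0 ∧
    A = ∑ i, a i • Matrix.of fun x y => ψ i x * (starRingEnd ℂ) (ψ i y)}

/-- the subspaces of traceless matrices diagonal in two mutually unbiased
orthonormal bases are trace-orthogonal. -/
theorem stmt_2 (n : ℕ) (hn : 0 < n)
    (ψ φ : Fin n → Fin n → ℂ)
    (hψ : ∀ i j, ∑ x, (starRingEnd ℂ) (ψ i x) * ψ j x = if i = j then 1 else 0)
    (hφ : ∀ i j, ∑ x, (starRingEnd ℂ) (φ i x) * φ j x = if i = j then 1 else 0)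
    (hmub : ∀ i j, ‖∑ x, (starRingEnd ℂ) (φ j x) * ψ i x‖ = 1 / Real.sqrt n) :
    ∀ A ∈ diagClass n ψ, ∀ B ∈ diagClass n φ, (A * B).trace = 0 := by
  rintro A ⟨a, ha, rfl⟩ B ⟨b, hb, rfl⟩
  -- trace of product of the rank-one projectors is 1/n
  have key : ∀ i j,
      ((Matrix.of fun x y => ψ i x * (starRingEnd ℂ) (ψ i y)) *
        (Matrix.of fun x y => φ j x * (starRingEnd ℂ) (φ j y))).trace = (n : ℂ)⁻¹ := by
    intro i j
    have habs := hmub i j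
    set s : ℂ := ∑ x, (starRingEnd ℂ) (φ j x) * ψ i x with hs
    have htr : ((Matrix.of fun x y => ψ i x * (starRingEnd ℂ) (ψ i y)) *
        (Matrix.of fun x y => φ j x * (starRingEnd ℂ) (φ j y))).trace
        = (starRingEnd ℂ) s * s := by
      simp only [Matrix.trace, Matrix.diag, Matrix.mul_apply, Matrix.of_apply, hs,
        map_sum, _root_.map_mul, RingHomCompTriple.comp_apply, RingHom.id_apply]
      rw [Finset.sum_mul]
      rw [Finset.sum_comm]
      refine Finset.sum_congr rfl fun y _ => ?_
      rw [Finset.mul_sum]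
      refine Finset.sum_congr rfl fun x _ => ?_
      ring
    rw [htr]
    have : (starRingEnd ℂ) s * s = (Complex.normSq s : ℂ) := by
      rw [mul_comm, Complex.mul_conj]
    rw [this]
    have h2 : Complex.normSq s = ‖s‖ ^ 2 := (Complex.sq_norm s).symm
    rw [h2, habs]
    have hn' : (0:ℝ) < (n:ℝ) := by exact_mod_cast hn
    rw [div_pow, one_pow, Real.sq_sqrt hn'.le]
    push_cast
    rw [one_div]
  rw [Finset.sum_mul]
  simp only [Finset.mul_sum, Matrix.smul_mul, Matrix.mul_smul]
  rw [Matrix.trace_sum]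
  simp only [Matrix.trace_sum, Matrix.trace_smul, key, smul_smul, smul_eq_mul]
  have : ∀ i ∈ Finset.univ, (∑ j, b j * a i * (n : ℂ)⁻¹) = (0:ℂ) := by
    intro i _
    simp only [mul_assoc]
    rw [← Finset.sum_mul, hb, zero_mul]
  rw [Finset.sum_congr rfl this]
  simp
end

section
/- Let H and H' be two commutative subalgebras of n×n complex matrices, each closed under the conjugate-transpose operation, each equal to the full space of traceless matrices diagonal in some orthonormal basis B (resp. B') of ℂ^n. If tr(AB) = 0 for all A ∈ H and B ∈ H', then the bases B and B' are mutually unbiased: |⟨φⱼ|ψᵢ⟩|² = 1/n for all i, j. -/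
/-!
Let `Pᵢ = |ψᵢ⟩⟨ψᵢ|` and `Qⱼ = |φⱼ⟩⟨φⱼ|`. Completeness of an orthonormal basis gives `∑ᵢ Pᵢ = 1`,
so `Pᵢ - 1/n` and `Qⱼ - 1/n` lie in `H` and `H'`. Since `tr Pᵢ = tr Qⱼ = 1`, their trace product is
`tr (Pᵢ Qⱼ) - 1/n = |⟨φⱼ|ψᵢ⟩|² - 1/n`, which must therefore vanish.
-/

open Matrix BigOperators

section RankOne

variable {ι : Type*} [Fintype ι]

theorem trace_vecMulVec_star_mul_vecMulVec_star (u v : ι → ℂ) :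
    trace (vecMulVec u (star u) * vecMulVec v (star v)) = ‖star v ⬝ᵥ u‖ ^ 2 := by
  rw [vecMulVec_mul_vecMulVec, trace_vecMulVec, dotProduct_smul, smul_eq_mul,
    dotProduct_comm u, ← Complex.conj_mul', star_dotProduct u v]
  rfl

theorem trace_vecMulVec_star_self_eq_one {v : ι → ℂ} (hv : star v ⬝ᵥ v = 1) :
    trace (vecMulVec v (star v)) = 1 := by
  rw [trace_vecMulVec, dotProduct_comm, hv]

theorem sum_vecMulVec_star_eq_one [DecidableEq ι] {ψ : ι → ι → ℂ}
    (hψ : ∀ i j, star (ψ i) ⬝ᵥ ψ j = if i = j then 1 else 0) :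
    ∑ k, vecMulVec (ψ k) (star (ψ k)) = 1 := by
  have hV : (of ψ)ᵀᴴ * (of ψ)ᵀ = 1 := by
    ext i j
    exact hψ i j
  have hV' : (of ψ)ᵀ * (of ψ)ᵀᴴ = 1 := mul_eq_one_comm.mp hV
  ext x y
  simpa [Matrix.sum_apply, mul_apply, vecMulVec_apply] using congr_fun₂ hV' x y

end RankOne

theorem trace_sub_smul_one_mul_sub_smul_one {ι K : Type*} [Fintype ι] [DecidableEq ι]
    [Nonempty ι] [Field K] [CharZero K] {P Q : Matrix ι ι K} (hP : trace P = 1)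
    (hQ : trace Q = 1) :
    trace ((P - (Fintype.card ι : K)⁻¹ • 1) * (Q - (Fintype.card ι : K)⁻¹ • 1)) =
      trace (P * Q) - (Fintype.card ι : K)⁻¹ := by
  have hcard : (Fintype.card ι : K) ≠ 0 := Nat.cast_ne_zero.mpr Fintype.card_ne_zero
  simp only [sub_mul, mul_sub, smul_mul, Matrix.mul_smul, one_mul, mul_one, smul_smul,
    trace_sub, trace_smul, trace_one, hP, hQ, smul_eq_mul]
  field_simp
  ring

theorem vecMulVec_star_sub_smul_one_mem_diagClass {n : ℕ} {ψ : Fin n → Fin n → ℂ}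
    (hψ : ∀ i j, star (ψ i) ⬝ᵥ ψ j = if i = j then 1 else 0) (i : Fin n) :
    vecMulVec (ψ i) (star (ψ i)) - (n : ℂ)⁻¹ • 1 ∈ diagClass n ψ := by
  have hn : (n : ℂ) ≠ 0 := Nat.cast_ne_zero.mpr (Fin.pos i).ne'
  refine ⟨Pi.single i 1 - fun _ => (n : ℂ)⁻¹, ?_, ?_⟩
  · simp [Finset.sum_sub_distrib, hn]
  · change _ = ∑ k, _ • vecMulVec (ψ k) (star (ψ k))
    simp [sub_smul, Finset.sum_sub_distrib, ← Finset.smul_sum, sum_vecMulVec_star_eq_one hψ,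
      Pi.single_apply]

theorem stmt_4_general (n : ℕ)
    (ψ φ : Fin n → Fin n → ℂ)
    (hψ : ∀ i j, ∑ x, (starRingEnd ℂ) (ψ i x) * ψ j x = if i = j then 1 else 0)
    (hφ : ∀ i j, ∑ x, (starRingEnd ℂ) (φ i x) * φ j x = if i = j then 1 else 0)
    (horth : ∀ A ∈ diagClass n ψ, ∀ B ∈ diagClass n φ, (A * B).trace = 0) :
    ∀ i j, ‖∑ x, (starRingEnd ℂ) (φ j x) * ψ i x‖ ^ 2 = 1 / n := by
  intro i j
  change ‖star (φ j) ⬝ᵥ ψ i‖ ^ 2 = 1 / n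
  have : Nonempty (Fin n) := ⟨i⟩
  have horth_ij := horth _ (vecMulVec_star_sub_smul_one_mem_diagClass hψ i)
    _ (vecMulVec_star_sub_smul_one_mem_diagClass hφ j)
  have hexpand := trace_sub_smul_one_mul_sub_smul_one
    (trace_vecMulVec_star_self_eq_one ((hψ i i).trans (if_pos rfl)))
    (trace_vecMulVec_star_self_eq_one ((hφ j j).trans (if_pos rfl)))
  rw [Fintype.card_fin, horth_ij, trace_vecMulVec_star_mul_vecMulVec_star, eq_comm,
    sub_eq_zero] at hexpand
  rw [one_div, ← Complex.ofReal_inj]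
  push_cast
  exact hexpand

/-- if the †-closed commutative algebras of traceless matrices diagonal in
orthonormal bases B and B' are trace-orthogonal, then B and B' are mutually unbiased. -/
theorem stmt_4 (n : ℕ) (hn : 0 < n)
    (ψ φ : Fin n → Fin n → ℂ)
    (hψ : ∀ i j, ∑ x, (starRingEnd ℂ) (ψ i x) * ψ j x = if i = j then 1 else 0)
    (hφ : ∀ i j, ∑ x, (starRingEnd ℂ) (φ i x) * φ j x = if i = j then 1 else 0)
    (horth : ∀ A ∈ diagClass n ψ, ∀ B ∈ diagClass n φ, (A * B).trace = 0) :
    ∀ i j, ‖∑ x, (starRingEnd ℂ) (φ j x) * ψ i x‖ ^ 2 = 1 / n :=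
  stmt_4_general n ψ φ hψ hφ horth
end

section
/- Let C₁,...,C_μ be sets of unitary n×n matrices, each C_k consisting of n pairwise commuting matrices containing the identity, with C_k ∩ C_l = {I} for k ≠ l, and all matrices in C₁ ∪ ⋯ ∪ C_μ pairwise orthogonal under the trace inner product. Let B_k be an orthonormal basis of common eigenvectors of C_k. Then for k ≠ l, any |ψ⟩ ∈ B_k and |φ⟩ ∈ B_l satisfy |⟨ψ|φ⟩|² = 1/n; i.e., the bases B₁,...,B_μ are mutually unbiased. -/
open Matrix BigOperators

section aux
variable {n : ℕ}

noncomputable def Umat (v : Fin n → Fin n → ℂ) : Matrix (Fin n) (Fin n) ℂ :=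
  Matrix.of fun a p => v p a

lemma Umat_conj_mul (v : Fin n → Fin n → ℂ)
    (hv : ∀ i j, ∑ x, (starRingEnd ℂ) (v i x) * v j x = if i = j then 1 else 0) :
    (Umat v)ᴴ * Umat v = 1 := by
  ext p q
  simp only [Matrix.mul_apply, Matrix.conjTranspose_apply, Umat, Matrix.of_apply,
    Matrix.one_apply, RCLike.star_def]
  exact hv p q

lemma Umat_mul_conj (v : Fin n → Fin n → ℂ)
    (hv : ∀ i j, ∑ x, (starRingEnd ℂ) (v i x) * v j x = if i = j then 1 else 0) :
    Umat v * (Umat v)ᴴ = 1 :=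
  mul_eq_one_comm.mp (Umat_conj_mul v hv)

lemma lam_spec (v : Fin n → Fin n → ℂ)
    (hv : ∀ i j, ∑ x, (starRingEnd ℂ) (v i x) * v j x = if i = j then 1 else 0)
    {A : Matrix (Fin n) (Fin n) ℂ} {c : ℂ} {i : Fin n}
    (h : A.mulVec (v i) = c • v i) :
    (∑ x, (starRingEnd ℂ) (v i x) * A.mulVec (v i) x) = c := by
  rw [h]
  have hvi : ∑ x, (starRingEnd ℂ) (v i x) * v i x = 1 := by simpa using hv i i
  calc ∑ x, (starRingEnd ℂ) (v i x) * (c • v i) x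
      = c * ∑ x, (starRingEnd ℂ) (v i x) * v i x := by
        rw [Finset.mul_sum]
        exact Finset.sum_congr rfl fun x _ => by simp [Pi.smul_apply]; ring
    _ = c := by rw [hvi, mul_one]

lemma diag_rep (v : Fin n → Fin n → ℂ)
    (hv : ∀ i j, ∑ x, (starRingEnd ℂ) (v i x) * v j x = if i = j then 1 else 0)
    {A : Matrix (Fin n) (Fin n) ℂ} {d : Fin n → ℂ}
    (hAd : ∀ i, A.mulVec (v i) = d i • v i) :
    A = Umat v * Matrix.diagonal d * (Umat v)ᴴ := by
  have h1 : A * Umat v = Umat v * Matrix.diagonal d := by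
    ext a p
    have hv1 := congrFun (hAd p) a
    simp only [Matrix.mulVec, dotProduct, Pi.smul_apply, smul_eq_mul] at hv1
    rw [Matrix.mul_diagonal]
    simp only [Matrix.mul_apply, Umat, Matrix.of_apply]
    rw [hv1]; ring
  calc A = A * (Umat v * (Umat v)ᴴ) := by rw [Umat_mul_conj v hv, mul_one]
    _ = (A * Umat v) * (Umat v)ᴴ := by rw [mul_assoc]
    _ = Umat v * Matrix.diagonal d * (Umat v)ᴴ := by rw [h1]

lemma trace_formula (v : Fin n → Fin n → ℂ)
    (hv : ∀ i j, ∑ x, (starRingEnd ℂ) (v i x) * v j x = if i = j then 1 else 0)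
    {A B : Matrix (Fin n) (Fin n) ℂ} {d e : Fin n → ℂ}
    (hAd : ∀ i, A.mulVec (v i) = d i • v i)
    (hBe : ∀ i, B.mulVec (v i) = e i • v i) :
    (Aᴴ * B).trace = ∑ p, (starRingEnd ℂ) (d p) * e p := by
  rw [diag_rep v hv hAd, diag_rep v hv hBe]
  set U := Umat v with hU
  have hUU : Uᴴ * U = 1 := Umat_conj_mul v hv
  have e1 : (U * Matrix.diagonal d * Uᴴ)ᴴ * (U * Matrix.diagonal e * Uᴴ)
      = U * (Matrix.diagonal (star d) * (Uᴴ * U) * Matrix.diagonal e) * Uᴴ := by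
    simp only [Matrix.conjTranspose_mul, Matrix.conjTranspose_conjTranspose,
      Matrix.diagonal_conjTranspose, Matrix.mul_assoc]
  rw [e1, hUU, Matrix.mul_one, Matrix.trace_mul_cycle, hUU, Matrix.one_mul,
    Matrix.diagonal_mul_diagonal, Matrix.trace_diagonal]
  simp only [Pi.mul_apply, Pi.star_apply, starRingEnd_apply]
end aux

section aux2
variable {n : ℕ}

lemma entry_formula (v : Fin n → Fin n → ℂ)
    (hv : ∀ i j, ∑ x, (starRingEnd ℂ) (v i x) * v j x = if i = j then 1 else 0)
    {A : Matrix (Fin n) (Fin n) ℂ} {d : Fin n → ℂ}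
    (hAd : ∀ i, A.mulVec (v i) = d i • v i) (a b : Fin n) :
    A a b = ∑ p, d p * (v p a * (starRingEnd ℂ) (v p b)) := by
  rw [diag_rep v hv hAd]
  simp only [Matrix.mul_apply, Matrix.mul_diagonal, Matrix.conjTranspose_apply, Umat,
    Matrix.of_apply, RCLike.star_def, Matrix.diagonal_apply, mul_ite, mul_zero,
    Finset.sum_ite_eq', Finset.mem_univ, if_true]
  exact Finset.sum_congr rfl fun p _ => by ring

lemma flip_unitary (hn : 0 < n) (M : Matrix (Fin n) (Fin n) ℂ)
    (h : M * Mᴴ = (n:ℂ) • 1) : Mᴴ * M = (n:ℂ) • 1 := by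
  have hne : (n:ℂ) ≠ 0 := Nat.cast_ne_zero.mpr hn.ne'
  have h1 : M * ((n:ℂ)⁻¹ • Mᴴ) = 1 := by
    rw [Matrix.mul_smul, h, smul_smul, inv_mul_cancel₀ hne, one_smul]
  have h2 := mul_eq_one_comm.mp h1
  calc Mᴴ * M = (n:ℂ) • (((n:ℂ)⁻¹ • Mᴴ) * M) := by
        rw [Matrix.smul_mul, smul_smul, mul_inv_cancel₀ hne, one_smul]
    _ = (n:ℂ) • 1 := by rw [h2]
end aux2

/-- common eigenbases of μ maximal commuting classes of trace-orthogonal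
unitaries (pairwise intersecting only in 1) are mutually unbiased. -/
theorem stmt_13 (n μ : ℕ) (hn : 0 < n)
    (C : Fin μ → Finset (Matrix (Fin n) (Fin n) ℂ))
    (hcard : ∀ k, (C k).card = n)
    (hone : ∀ k, (1 : Matrix (Fin n) (Fin n) ℂ) ∈ C k)
    (hunit : ∀ k, ∀ A ∈ C k, Aᴴ * A = 1)
    (hcomm : ∀ k, ∀ A ∈ C k, ∀ B ∈ C k, A * B = B * A)
    (hint : ∀ k l, k ≠ l → C k ∩ C l = {1})
    (horth : ∀ k l, ∀ A ∈ C k, ∀ B ∈ C l, A ≠ B → (Aᴴ * B).trace = 0)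
    (ψ : Fin μ → Fin n → Fin n → ℂ)
    (hψ : ∀ k i j, ∑ x, (starRingEnd ℂ) (ψ k i x) * ψ k j x = if i = j then 1 else 0)
    (heig : ∀ k, ∀ A ∈ C k, ∀ i, ∃ c : ℂ, A.mulVec (ψ k i) = c • ψ k i) :
    ∀ k l, k ≠ l → ∀ i j,
      ‖∑ x, (starRingEnd ℂ) (ψ k i x) * ψ l j x‖ ^ 2 = 1 / n := by
  classical
  have hn0 : (n:ℂ) ≠ 0 := Nat.cast_ne_zero.mpr hn.ne'
  set lam : Fin μ → Matrix (Fin n) (Fin n) ℂ → Fin n → ℂ :=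
    fun m A p => ∑ x, (starRingEnd ℂ) (ψ m p x) * A.mulVec (ψ m p) x with hlamdef
  have hlam : ∀ m, ∀ A ∈ C m, ∀ p, A.mulVec (ψ m p) = lam m A p • ψ m p := by
    intro m A hA p
    obtain ⟨c, hc⟩ := heig m A hA p
    have h2 : lam m A p = c := lam_spec (ψ m) (hψ m) hc
    rw [hc, h2]
  have hlam_one : ∀ m p, lam m (1 : Matrix (Fin n) (Fin n) ℂ) p = 1 := by
    intro m p
    have h2 : lam m 1 p = ∑ x, (starRingEnd ℂ) (ψ m p x) * ψ m p x := by
      simp only [hlamdef, Matrix.one_mulVec]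
    rw [h2]; simpa using hψ m p p
  have htr : ∀ m, ∀ A ∈ C m, ∀ B ∈ C m,
      (Aᴴ * B).trace = ∑ p, (starRingEnd ℂ) (lam m A p) * lam m B p :=
    fun m A hA B hB => trace_formula (ψ m) (hψ m) (hlam m A hA) (hlam m B hB)
  have hcol : ∀ m p q,
      (∑ A ∈ C m, (starRingEnd ℂ) (lam m A p) * lam m A q) = if p = q then (n:ℂ) else 0 := by
    intro m p q
    have e : Fin n ≃ {x // x ∈ C m} := (finCongr (hcard m).symm).trans (C m).equivFin.symm
    set M : Matrix (Fin n) (Fin n) ℂ :=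
      Matrix.of (fun r s => lam m ((e r : {x // x ∈ C m}) : Matrix (Fin n) (Fin n) ℂ) s) with hMdef
    have hMM : M * Mᴴ = (n:ℂ) • 1 := by
      ext r t
      have lhs : (M * Mᴴ) r t
          = ∑ x, lam m ((e r : {x // x ∈ C m}) : Matrix (Fin n) (Fin n) ℂ) x
              * (starRingEnd ℂ) (lam m ((e t : {x // x ∈ C m}) : Matrix (Fin n) (Fin n) ℂ) x) := by
        simp [Matrix.mul_apply, Matrix.conjTranspose_apply, hMdef, RCLike.star_def]
      have hrs2 : (M * Mᴴ) r t
          = ((((e t : {x // x ∈ C m}) : Matrix (Fin n) (Fin n) ℂ))ᴴ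
              * (((e r : {x // x ∈ C m}) : Matrix (Fin n) (Fin n) ℂ))).trace := by
        rw [lhs, htr m _ (e t).2 _ (e r).2]
        exact Finset.sum_congr rfl fun x _ => mul_comm _ _
      rw [hrs2]
      by_cases hrt : r = t
      · subst hrt
        rw [hunit m _ (e r).2, Matrix.trace_one]
        simp [Matrix.one_apply]
      · have hne : (((e t : {x // x ∈ C m}) : Matrix (Fin n) (Fin n) ℂ))
            ≠ (((e r : {x // x ∈ C m}) : Matrix (Fin n) (Fin n) ℂ)) := by
          intro h
          exact hrt (e.injective (Subtype.ext h)).symm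
        rw [horth m m _ (e t).2 _ (e r).2 hne]
        simp [Matrix.one_apply, hrt]
    have hM2 : Mᴴ * M = (n:ℂ) • 1 := flip_unitary hn M hMM
    have key : (∑ r, (starRingEnd ℂ) (M r p) * M r q) = if p = q then (n:ℂ) else 0 := by
      have h3 := congrFun (congrFun hM2 p) q
      simp only [Matrix.mul_apply, Matrix.conjTranspose_apply, Matrix.smul_apply,
        Matrix.one_apply, smul_eq_mul, RCLike.star_def] at h3
      rw [h3]
      split_ifs <;> simp
    calc (∑ A ∈ C m, (starRingEnd ℂ) (lam m A p) * lam m A q)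
        = ∑ a : {x // x ∈ C m}, (starRingEnd ℂ) (lam m (a : Matrix (Fin n) (Fin n) ℂ) p)
            * lam m (a : Matrix (Fin n) (Fin n) ℂ) q := by
          rw [← Finset.sum_coe_sort]
      _ = ∑ r, (starRingEnd ℂ) (M r p) * M r q :=
          (Equiv.sum_comp e (fun a : {x // x ∈ C m} =>
            (starRingEnd ℂ) (lam m (a : Matrix (Fin n) (Fin n) ℂ) p)
              * lam m (a : Matrix (Fin n) (Fin n) ℂ) q)).symm
      _ = _ := key
  have hentry : ∀ m, ∀ A ∈ C m, ∀ a b,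
      A a b = ∑ p, lam m A p * (ψ m p a * (starRingEnd ℂ) (ψ m p b)) :=
    fun m A hA a b => entry_formula (ψ m) (hψ m) (hlam m A hA) a b
  have hproj : ∀ m p a b,
      (∑ A ∈ C m, (starRingEnd ℂ) (lam m A p) • A) a b
        = (n:ℂ) * (ψ m p a * (starRingEnd ℂ) (ψ m p b)) := by
    intro m p a b
    rw [Matrix.sum_apply]
    calc ∑ A ∈ C m, ((starRingEnd ℂ) (lam m A p) • A) a b
        = ∑ A ∈ C m, ∑ q, (starRingEnd ℂ) (lam m A p) * lam m A q
            * (ψ m q a * (starRingEnd ℂ) (ψ m q b)) := by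
          refine Finset.sum_congr rfl fun A hA => ?_
          rw [Matrix.smul_apply, smul_eq_mul, hentry m A hA a b, Finset.mul_sum]
          exact Finset.sum_congr rfl fun q _ => by ring
      _ = ∑ q, (∑ A ∈ C m, (starRingEnd ℂ) (lam m A p) * lam m A q)
            * (ψ m q a * (starRingEnd ℂ) (ψ m q b)) := by
          rw [Finset.sum_comm]
          exact Finset.sum_congr rfl fun q _ => by rw [Finset.sum_mul]
      _ = (n:ℂ) * (ψ m p a * (starRingEnd ℂ) (ψ m p b)) := by
          simp only [hcol, ite_mul, zero_mul]
          rw [Finset.sum_ite_eq]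
          simp
  intro k l hkl i j
  set s := ∑ x, (starRingEnd ℂ) (ψ k i x) * ψ l j x with hs
  set P : Matrix (Fin n) (Fin n) ℂ :=
    Matrix.of fun a b => ψ k i a * (starRingEnd ℂ) (ψ k i b) with hP
  set Q : Matrix (Fin n) (Fin n) ℂ :=
    Matrix.of fun a b => ψ l j a * (starRingEnd ℂ) (ψ l j b) with hQ
  have hPk : (∑ A ∈ C k, (starRingEnd ℂ) (lam k A i) • A) = (n:ℂ) • P := by
    ext a b; rw [hproj k i a b]; simp [hP]
  have hQl : (∑ B ∈ C l, (starRingEnd ℂ) (lam l B j) • B) = (n:ℂ) • Q := by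
    ext a b; rw [hproj l j a b]; simp [hQ]
  have htrace1 : (Pᴴ * Q).trace = (starRingEnd ℂ) s * s := by
    have h1 : (Pᴴ * Q).trace = ∑ a, ∑ b, (starRingEnd ℂ) (P b a) * Q b a := by
      simp [Matrix.trace, Matrix.diag, Matrix.mul_apply, Matrix.conjTranspose_apply,
        RCLike.star_def]
    rw [h1, hs, map_sum, Finset.sum_mul_sum]
    refine Finset.sum_congr rfl fun a _ => Finset.sum_congr rfl fun b _ => ?_
    simp only [hP, hQ, Matrix.of_apply, _root_.map_mul, Complex.conj_conj]
    ring
  have htrace2 : (((n:ℂ) • P)ᴴ * ((n:ℂ) • Q)).trace = (n:ℂ) := by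
    rw [← hPk, ← hQl]
    have expand : ((∑ A ∈ C k, (starRingEnd ℂ) (lam k A i) • A)ᴴ
        * (∑ B ∈ C l, (starRingEnd ℂ) (lam l B j) • B)).trace
        = ∑ A ∈ C k, ∑ B ∈ C l,
            lam k A i * ((starRingEnd ℂ) (lam l B j) * (Aᴴ * B).trace) := by
      simp only [Matrix.conjTranspose_sum, Matrix.conjTranspose_smul, Finset.sum_mul,
        Finset.mul_sum, Matrix.smul_mul, Matrix.mul_smul, Matrix.trace_sum, Matrix.trace_smul,
        smul_smul, smul_eq_mul, RCLike.star_def, Complex.conj_conj]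
      rw [Finset.sum_comm]
      exact Finset.sum_congr rfl fun A _ => Finset.sum_congr rfl fun B _ => by ring
    rw [expand]
    have inner : ∀ A ∈ C k,
        (∑ B ∈ C l, lam k A i * ((starRingEnd ℂ) (lam l B j) * (Aᴴ * B).trace))
        = if A ∈ C l then lam k A i * ((starRingEnd ℂ) (lam l A j) * (Aᴴ * A).trace) else 0 := by
      intro A hA
      rw [← Finset.sum_ite_eq (C l) A
        (fun B => lam k A i * ((starRingEnd ℂ) (lam l B j) * (Aᴴ * B).trace))]
      refine Finset.sum_congr rfl fun B hB => ?_
      by_cases hAB : A = B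
      · subst hAB; simp
      · rw [horth k l A hA B hB hAB]
        simp [hAB]
    rw [Finset.sum_congr rfl inner, Finset.sum_ite_mem, hint k l hkl, Finset.sum_singleton,
      hlam_one, hlam_one, Matrix.conjTranspose_one, Matrix.one_mul, Matrix.trace_one]
    simp
  have hkey : (n:ℂ) * ((n:ℂ) * ((starRingEnd ℂ) s * s)) = (n:ℂ) := by
    calc (n:ℂ) * ((n:ℂ) * ((starRingEnd ℂ) s * s))
        = (((n:ℂ) • P)ᴴ * ((n:ℂ) • Q)).trace := by
          rw [Matrix.conjTranspose_smul, Matrix.smul_mul, Matrix.mul_smul, Matrix.trace_smul,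
            Matrix.trace_smul, smul_eq_mul, smul_eq_mul, htrace1]
          have : star (n:ℂ) = (n:ℂ) := by simp
          rw [this]
      _ = (n:ℂ) := htrace2
  have h5 : (n:ℂ) * ((starRingEnd ℂ) s * s) = 1 := by
    have := hkey
    field_simp at this ⊢
    linear_combination this
  have hss : (starRingEnd ℂ) s * s = 1 / (n:ℂ) := by
    field_simp
    linear_combination h5
  have habs : (Complex.normSq s : ℂ) = 1 / (n:ℂ) := by
    rw [← hss, Complex.normSq_eq_conj_mul_self]
  rw [Complex.sq_norm]
  have hfin : (Complex.normSq s : ℂ) = ((1 / (n:ℝ) : ℝ) : ℂ) := by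
    rw [habs]; push_cast; ring
  exact_mod_cast hfin
end

section
/- Given μ mutually unbiased bases B₁,...,B_μ of ℂ^n, there exist μ maximal commuting classes C₁,...,C_μ of unitary matrices, each of size n and containing the identity, pairwise intersecting only in the identity, such that all matrices in their union are pairwise orthogonal under the trace inner product and B_k diagonalizes C_k. -/
open Matrix BigOperators

noncomputable section Stmt14Aux

namespace Stmt14

-- ===== part 1: matrices M ψ c = V diag(c) Vᴴ =====

variable {n : ℕ}

def V (ψ : Fin n → Fin n → ℂ) : Matrix (Fin n) (Fin n) ℂ := Matrix.of fun a i => ψ i a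

def M (ψ : Fin n → Fin n → ℂ) (c : Fin n → ℂ) : Matrix (Fin n) (Fin n) ℂ :=
  V ψ * Matrix.diagonal c * (V ψ)ᴴ

abbrev Orth (ψ : Fin n → Fin n → ℂ) : Prop :=
  ∀ i j, ∑ x, (starRingEnd ℂ) (ψ i x) * ψ j x = if i = j then 1 else 0

lemma VHV {ψ : Fin n → Fin n → ℂ} (hψ : Orth ψ) : (V ψ)ᴴ * V ψ = 1 := by
  ext i j
  simpa [Matrix.mul_apply, V, Matrix.conjTranspose_apply, Matrix.one_apply] using hψ i j

lemma VVH {ψ : Fin n → Fin n → ℂ} (hψ : Orth ψ) : V ψ * (V ψ)ᴴ = 1 :=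
  mul_eq_one_comm.mp (VHV hψ)

lemma M_one {ψ : Fin n → Fin n → ℂ} (hψ : Orth ψ) : M ψ (fun _ => 1) = 1 := by
  have h : Matrix.diagonal (fun _ : Fin n => (1:ℂ)) = 1 := Matrix.diagonal_one
  rw [M, h, Matrix.mul_one, VVH hψ]

lemma M_mul {ψ : Fin n → Fin n → ℂ} (hψ : Orth ψ) (c d : Fin n → ℂ) :
    M ψ c * M ψ d = M ψ (fun i => c i * d i) := by
  have key : ∀ X : Matrix (Fin n) (Fin n) ℂ, (V ψ)ᴴ * (V ψ * X) = X := by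
    intro X; rw [← Matrix.mul_assoc, VHV hψ, Matrix.one_mul]
  simp only [M, Matrix.mul_assoc, key]
  rw [← Matrix.mul_assoc (Matrix.diagonal c), Matrix.diagonal_mul_diagonal]

lemma M_ct {ψ : Fin n → Fin n → ℂ} (c : Fin n → ℂ) :
    (M ψ c)ᴴ = M ψ (fun i => (starRingEnd ℂ) (c i)) := by
  simp only [M, Matrix.conjTranspose_mul, Matrix.conjTranspose_conjTranspose,
    Matrix.diagonal_conjTranspose, Matrix.mul_assoc]
  rfl

lemma M_trace {ψ : Fin n → Fin n → ℂ} (hψ : Orth ψ) (c : Fin n → ℂ) :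
    (M ψ c).trace = ∑ i, c i := by
  rw [M, Matrix.trace_mul_comm, ← Matrix.mul_assoc, VHV hψ, Matrix.one_mul,
    Matrix.trace_diagonal]

lemma M_diag {ψ : Fin n → Fin n → ℂ} (hψ : Orth ψ) (c : Fin n → ℂ) :
    (V ψ)ᴴ * M ψ c * V ψ = Matrix.diagonal c := by
  rw [M]
  calc (V ψ)ᴴ * (V ψ * Matrix.diagonal c * (V ψ)ᴴ) * V ψ
      = ((V ψ)ᴴ * V ψ) * Matrix.diagonal c * ((V ψ)ᴴ * V ψ) := by
        simp only [Matrix.mul_assoc]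
    _ = Matrix.diagonal c := by rw [VHV hψ, Matrix.one_mul, Matrix.mul_one]

lemma M_inj {ψ : Fin n → Fin n → ℂ} (hψ : Orth ψ) {c d : Fin n → ℂ}
    (h : M ψ c = M ψ d) : c = d := by
  have h2 : Matrix.diagonal c = Matrix.diagonal d := by
    rw [← M_diag hψ c, ← M_diag hψ d, h]
  funext i
  have h3 := congrFun (congrFun h2 i) i
  simpa [Matrix.diagonal] using h3

lemma M_apply (ψ : Fin n → Fin n → ℂ) (c : Fin n → ℂ) (a b : Fin n) :
    M ψ c a b = ∑ i, c i * ψ i a * (starRingEnd ℂ) (ψ i b) := by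
  simp only [M, Matrix.mul_apply, Matrix.conjTranspose_apply, V, Matrix.of_apply,
    Matrix.diagonal_apply, mul_ite, mul_zero, Finset.sum_ite_eq', Finset.mem_univ, if_true,
    ite_mul, zero_mul]
  exact Finset.sum_congr rfl fun i _ => by rw [Complex.star_def]; ring

lemma M_mulVec {ψ : Fin n → Fin n → ℂ} (hψ : Orth ψ) (c : Fin n → ℂ) (i : Fin n) :
    (M ψ c).mulVec (ψ i) = c i • ψ i := by
  funext a
  have h1 : (M ψ c).mulVec (ψ i) a
      = ∑ j, c j * ψ j a * (∑ b, (starRingEnd ℂ) (ψ j b) * ψ i b) := by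
    simp only [Matrix.mulVec, dotProduct, M_apply, Finset.sum_mul, Finset.mul_sum]
    rw [Finset.sum_comm]
    exact Finset.sum_congr rfl fun j _ => Finset.sum_congr rfl fun b _ => by ring
  rw [h1]
  simp [hψ, mul_ite, Finset.sum_ite_eq']

lemma trace_same {ψ : Fin n → Fin n → ℂ} (hψ : Orth ψ) (c d : Fin n → ℂ) :
    ((M ψ c)ᴴ * M ψ d).trace = ∑ i, (starRingEnd ℂ) (c i) * d i := by
  rw [M_ct, M_mul hψ, M_trace hψ]

lemma W_apply (ψ ψ' : Fin n → Fin n → ℂ) (i j : Fin n) :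
    ((V ψ)ᴴ * V ψ') i j = ∑ a, (starRingEnd ℂ) (ψ i a) * ψ' j a := by
  simp [Matrix.mul_apply, Matrix.conjTranspose_apply, V, Complex.star_def]

lemma trace_cross (ψ ψ' : Fin n → Fin n → ℂ) (c d : Fin n → ℂ) :
    ((M ψ c)ᴴ * M ψ' d).trace =
      ∑ j, ∑ i, (starRingEnd ℂ) (c i) * d j *
        ((starRingEnd ℂ) (∑ a, (starRingEnd ℂ) (ψ i a) * ψ' j a) *
          (∑ a, (starRingEnd ℂ) (ψ i a) * ψ' j a)) := by
  set W : Matrix (Fin n) (Fin n) ℂ := (V ψ)ᴴ * V ψ' with hW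
  have h1 : (M ψ c)ᴴ * M ψ' d
      = (V ψ * (Matrix.diagonal (fun i => (starRingEnd ℂ) (c i)) * (W * Matrix.diagonal d)))
        * (V ψ')ᴴ := by
    rw [M_ct]
    simp only [M, hW, Matrix.mul_assoc]
  rw [h1, Matrix.trace_mul_comm]
  have h2 : (V ψ')ᴴ *
      (V ψ * (Matrix.diagonal (fun i => (starRingEnd ℂ) (c i)) * (W * Matrix.diagonal d)))
      = (Wᴴ * Matrix.diagonal (fun i => (starRingEnd ℂ) (c i))) * (W * Matrix.diagonal d) := by
    have h4 : Wᴴ = (V ψ')ᴴ * V ψ := by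
      rw [hW, Matrix.conjTranspose_mul, Matrix.conjTranspose_conjTranspose]
    rw [h4]
    simp only [Matrix.mul_assoc]
  rw [h2]
  have h3 : ∀ (X Y : Matrix (Fin n) (Fin n) ℂ), (X * Y).trace = ∑ j, ∑ i, X j i * Y i j := by
    intro X Y
    simp [Matrix.trace, Matrix.mul_apply, Matrix.diag]
  rw [h3]
  simp only [Matrix.mul_diagonal, Matrix.conjTranspose_apply, Complex.star_def]
  refine Finset.sum_congr rfl fun j _ => Finset.sum_congr rfl fun i _ => ?_
  rw [← W_apply ψ ψ' i j]
  ring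

lemma trace_cross_val (ψ ψ' : Fin n → Fin n → ℂ) (c d : Fin n → ℂ)
    (hm : ∀ i j, ‖∑ x, (starRingEnd ℂ) (ψ i x) * ψ' j x‖ ^ 2 = 1 / n) :
    ((M ψ c)ᴴ * M ψ' d).trace
      = (∑ i, (starRingEnd ℂ) (c i)) * (∑ j, d j) / n := by
  rw [trace_cross]
  have key : ∀ i j, (starRingEnd ℂ) (∑ a, (starRingEnd ℂ) (ψ i a) * ψ' j a) *
      (∑ a, (starRingEnd ℂ) (ψ i a) * ψ' j a) = (n : ℂ)⁻¹ := by
    intro i j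
    set s := ∑ a, (starRingEnd ℂ) (ψ i a) * ψ' j a with hs
    have h1 : (starRingEnd ℂ) s * s = (Complex.normSq s : ℂ) := by
      rw [mul_comm, Complex.mul_conj]
    rw [h1, ← Complex.sq_norm, hm i j]
    push_cast
    rw [one_div]
  simp only [key]
  calc ∑ j, ∑ i, (starRingEnd ℂ) (c i) * d j * (n:ℂ)⁻¹
      = ∑ j, (∑ i, (starRingEnd ℂ) (c i)) * (d j * (n:ℂ)⁻¹) := by
        refine Finset.sum_congr rfl fun j _ => ?_
        rw [Finset.sum_mul]
        exact Finset.sum_congr rfl fun i _ => by ring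
    _ = (∑ i, (starRingEnd ℂ) (c i)) * (∑ j, d j) / n := by
        rw [← Finset.mul_sum, ← Finset.sum_mul, div_eq_mul_inv, mul_assoc]

-- ===== part 2: roots of unity =====

lemma dvd_iff {n : ℕ} (hn : 0 < n) (t s : Fin n) :
    n ∣ ((n - 1) * (t : ℕ) + (s : ℕ)) ↔ t = s := by
  have hmul : (n - 1) * (t : ℕ) + (t : ℕ) = n * t := by
    have h1 := Nat.sub_one_mul n (t : ℕ)
    have h2 : (t : ℕ) ≤ n * t := Nat.le_mul_of_pos_left _ hn
    omega
  constructor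
  · intro h
    have h0 : ((n - 1) * (t : ℕ) + s) % n = 0 := Nat.mod_eq_zero_of_dvd h
    have e1 : ((n - 1) * (t : ℕ) + s + t) % n = (s : ℕ) := by
      have harr : (n - 1) * (t : ℕ) + s + t = n * t + s := by omega
      rw [harr, Nat.mul_add_mod, Nat.mod_eq_of_lt s.isLt]
    have e2 : ((n - 1) * (t : ℕ) + s + t) % n = (t : ℕ) := by
      rw [Nat.add_mod, h0]
      simp [Nat.mod_eq_of_lt t.isLt]
    exact Fin.ext (e2.symm.trans e1)
  · rintro rfl
    exact ⟨t, hmul⟩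

local notation "ζ" => Complex.exp (2 * Real.pi * Complex.I / n)

lemma hstar1 (hn : 0 < n) : (starRingEnd ℂ) (ζ) * (ζ) = 1 := by
  have hprim : IsPrimitiveRoot ζ n := Complex.isPrimitiveRoot_exp n hn.ne'
  have habs : ‖(ζ : ℂ)‖ = 1 := Complex.norm_eq_one_of_pow_eq_one hprim.pow_eq_one hn.ne'
  rw [mul_comm, Complex.mul_conj, Complex.normSq_eq_norm_sq, habs]
  norm_num

lemma hstar (hn : 0 < n) (m : ℕ) : (starRingEnd ℂ) ((ζ) ^ m) * (ζ) ^ m = 1 := by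
  rw [map_pow, ← mul_pow, hstar1 hn, one_pow]

lemma hconj (hn : 0 < n) : (starRingEnd ℂ) ζ = (ζ) ^ (n - 1) := by
  have hprim : IsPrimitiveRoot ζ n := Complex.isPrimitiveRoot_exp n hn.ne'
  have h2 : (ζ) * (ζ) ^ (n - 1) = 1 := by
    rw [← pow_succ']
    have h3 : n - 1 + 1 = n := by omega
    rw [h3, hprim.pow_eq_one]
  calc (starRingEnd ℂ) ζ = (starRingEnd ℂ) ζ * ((ζ) * (ζ) ^ (n - 1)) := by rw [h2, mul_one]
    _ = ((starRingEnd ℂ) ζ * ζ) * (ζ) ^ (n - 1) := by ring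
    _ = (ζ) ^ (n - 1) := by rw [hstar1 hn, one_mul]

lemma gsum (hn : 0 < n) (m : ℕ) :
    ∑ i : Fin n, (ζ) ^ (m * (i : ℕ)) = if n ∣ m then (n : ℂ) else 0 := by
  have hprim : IsPrimitiveRoot ζ n := Complex.isPrimitiveRoot_exp n hn.ne'
  have hrw : ∀ i : Fin n, (ζ) ^ (m * (i : ℕ)) = ((ζ) ^ m) ^ (i : ℕ) := fun i => by
    rw [← pow_mul]
  simp only [hrw]
  rw [Fin.sum_univ_eq_sum_range (fun i => ((ζ) ^ m) ^ i) n]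
  by_cases h : n ∣ m
  · rw [if_pos h, (hprim.pow_eq_one_iff_dvd m).mpr h]
    simp
  · rw [if_neg h]
    have hne : (ζ) ^ m ≠ 1 := fun hc => h ((hprim.pow_eq_one_iff_dvd m).mp hc)
    rw [geom_sum_eq hne, ← pow_mul, mul_comm m n, pow_mul, hprim.pow_eq_one, one_pow]
    simp

lemma csum (hn : 0 < n) (t : Fin n) :
    ∑ i : Fin n, (ζ) ^ ((t : ℕ) * (i : ℕ)) = if (t : ℕ) = 0 then (n : ℂ) else 0 := by
  rw [gsum hn]
  congr 1
  simp only [eq_iff_iff]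
  exact ⟨fun h => Nat.eq_zero_of_dvd_of_lt h t.isLt, fun h => h ▸ dvd_zero n⟩

lemma csumconj (hn : 0 < n) (t : Fin n) :
    ∑ i : Fin n, (starRingEnd ℂ) ((ζ) ^ ((t : ℕ) * (i : ℕ)))
      = if (t : ℕ) = 0 then (n : ℂ) else 0 := by
  rw [← map_sum, csum hn]
  split_ifs <;> simp

lemma ortho (hn : 0 < n) (t s : Fin n) :
    ∑ i : Fin n, (starRingEnd ℂ) ((ζ) ^ ((t:ℕ) * (i:ℕ))) * (ζ) ^ ((s:ℕ) * (i:ℕ))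
      = if t = s then (n : ℂ) else 0 := by
  have hrw : ∀ i : Fin n, (starRingEnd ℂ) ((ζ) ^ ((t:ℕ) * (i:ℕ))) * (ζ) ^ ((s:ℕ) * (i:ℕ))
      = (ζ) ^ (((n-1) * (t:ℕ) + (s:ℕ)) * (i:ℕ)) := by
    intro i
    rw [map_pow, hconj hn, ← pow_mul, ← pow_add]
    congr 1
    ring
  simp only [hrw]
  rw [gsum hn]
  congr 1
  simp only [eq_iff_iff]
  exact dvd_iff hn t s

end Stmt14

end Stmt14Aux

open Stmt14 in
/-- given μ mutually unbiased bases of ℂ^n, there exist μ maximal commuting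
classes of unitary matrices, each of size n, containing the identity, pairwise
intersecting only in the identity, pairwise trace-orthogonal, with B_k diagonalizing C_k. -/
theorem stmt_14 (n μ : ℕ) (hn : 0 < n)
    (ψ : Fin μ → Fin n → Fin n → ℂ)
    (hψ : ∀ k i j, ∑ x, (starRingEnd ℂ) (ψ k i x) * ψ k j x = if i = j then 1 else 0)
    (hmub : ∀ k l, k ≠ l → ∀ i j,
      ‖∑ x, (starRingEnd ℂ) (ψ k i x) * ψ l j x‖ ^ 2 = 1 / n) :
    ∃ C : Fin μ → Finset (Matrix (Fin n) (Fin n) ℂ),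
      (∀ k, (C k).card = n) ∧
      (∀ k, (1 : Matrix (Fin n) (Fin n) ℂ) ∈ C k) ∧
      (∀ k, ∀ A ∈ C k, Aᴴ * A = 1) ∧
      (∀ k, ∀ A ∈ C k, ∀ B ∈ C k, A * B = B * A) ∧
      (∀ k l, k ≠ l → C k ∩ C l = {1}) ∧
      (∀ k l, ∀ A ∈ C k, ∀ B ∈ C l, A ≠ B → (Aᴴ * B).trace = 0) ∧
      (∀ k, ∀ A ∈ C k, ∀ i, ∃ c : ℂ, A.mulVec (ψ k i) = c • ψ k i) := by
  classical
  set ζ : ℂ := Complex.exp (2 * Real.pi * Complex.I / n) with hζdef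
  set cf : Fin n → Fin n → ℂ := fun t i => ζ ^ ((t : ℕ) * (i : ℕ)) with hcf
  set b : Fin μ → Fin n → Matrix (Fin n) (Fin n) ℂ := fun k t => M (ψ k) (cf t) with hb
  have hnC : (n : ℂ) ≠ 0 := Nat.cast_ne_zero.mpr hn.ne'
  have t0 : Fin n := ⟨0, hn⟩
  -- identity
  have hb0 : ∀ k, b k ⟨0, hn⟩ = 1 := by
    intro k
    have : cf ⟨0, hn⟩ = fun _ => 1 := by
      funext i; simp [hcf]
    rw [hb]; simp only [this]; exact M_one (hψ k)
  -- injectivity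
  have hinj : ∀ k, Function.Injective (b k) := by
    intro k t s h
    have hc : cf t = cf s := M_inj (hψ k) h
    by_contra hts
    have h1 : ∑ i : Fin n, (starRingEnd ℂ) (cf t i) * cf s i = 0 := by
      rw [show (∑ i : Fin n, (starRingEnd ℂ) (cf t i) * cf s i)
          = if t = s then (n:ℂ) else 0 from ortho hn t s, if_neg hts]
    rw [← hc] at h1
    have h2 : ∑ i : Fin n, (starRingEnd ℂ) (cf t i) * cf t i = (n : ℂ) := by
      have : ∀ i : Fin n, (starRingEnd ℂ) (cf t i) * cf t i = 1 := fun i => hstar hn _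
      simp [this]
    rw [h2] at h1
    exact hnC h1
  -- unitarity of each b k t
  have huni : ∀ k t, (b k t)ᴴ * b k t = 1 := by
    intro k t
    rw [hb]
    simp only
    rw [M_ct, M_mul (hψ k)]
    have : (fun i => (starRingEnd ℂ) (cf t i) * cf t i) = fun _ : Fin n => (1:ℂ) := by
      funext i; exact hstar hn _
    rw [this, M_one (hψ k)]
  -- same-basis trace
  have htr_same : ∀ k t s, ((b k t)ᴴ * b k s).trace = if t = s then (n:ℂ) else 0 := by
    intro k t s
    rw [hb]
    simp only
    rw [trace_same (hψ k)]
    exact ortho hn t s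
  -- cross-basis trace
  have htr_cross : ∀ k l, k ≠ l → ∀ t s, ((b k t)ᴴ * b l s).trace
      = (if (t:ℕ) = 0 then (n:ℂ) else 0) * (if (s:ℕ) = 0 then (n:ℂ) else 0) / n := by
    intro k l hkl t s
    rw [hb]
    simp only
    rw [trace_cross_val (ψ k) (ψ l) _ _ (hmub k l hkl)]
    rw [csumconj hn t, csum hn s]
  refine ⟨fun k => Finset.image (b k) Finset.univ, ?_, ?_, ?_, ?_, ?_, ?_, ?_⟩
  · intro k
    rw [Finset.card_image_of_injective _ (hinj k), Finset.card_univ, Fintype.card_fin]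
  · intro k
    exact Finset.mem_image.mpr ⟨⟨0, hn⟩, Finset.mem_univ _, hb0 k⟩
  · intro k A hA
    obtain ⟨t, -, rfl⟩ := Finset.mem_image.mp hA
    exact huni k t
  · intro k A hA B hB
    obtain ⟨t, -, rfl⟩ := Finset.mem_image.mp hA
    obtain ⟨s, -, rfl⟩ := Finset.mem_image.mp hB
    rw [hb]
    simp only
    rw [M_mul (hψ k), M_mul (hψ k)]
    have hcomm : (fun i => cf t i * cf s i) = (fun i => cf s i * cf t i) := by
      funext i
      exact mul_comm _ _
    rw [hcomm]
  · intro k l hkl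
    ext A
    simp only [Finset.mem_inter, Finset.mem_image, Finset.mem_singleton]
    constructor
    · rintro ⟨⟨t, -, rfl⟩, ⟨s, -, hB⟩⟩
      have e1 : ((b k t)ᴴ * b k t).trace = (n : ℂ) := by
        rw [htr_same k t t, if_pos rfl]
      have e2 := htr_cross k l hkl t s
      rw [hB, e1] at e2
      by_cases ht : (t : ℕ) = 0
      · rw [show t = ⟨0, hn⟩ from Fin.ext ht]
        exact hb0 k
      · exfalso
        rw [if_neg ht, zero_mul, zero_div] at e2
        exact hnC e2
    · rintro rfl
      exact ⟨⟨⟨0, hn⟩, Finset.mem_univ _, hb0 k⟩, ⟨⟨0, hn⟩, Finset.mem_univ _, hb0 l⟩⟩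
  · intro k l A hA B hB hAB
    obtain ⟨t, -, rfl⟩ := Finset.mem_image.mp hA
    obtain ⟨s, -, rfl⟩ := Finset.mem_image.mp hB
    rcases eq_or_ne k l with rfl | hkl
    · have hts : t ≠ s := fun h => hAB (by rw [h])
      rw [htr_same k t s, if_neg hts]
    · rw [htr_cross k l hkl t s]
      by_cases ht : (t : ℕ) = 0
      · by_cases hs : (s : ℕ) = 0
        · exfalso
          have ht' : t = ⟨0, hn⟩ := Fin.ext ht
          have hs' : s = ⟨0, hn⟩ := Fin.ext hs
          rw [ht', hs', hb0 k, hb0 l] at hAB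
          exact hAB rfl
        · rw [if_neg hs, mul_zero, zero_div]
      · rw [if_neg ht, zero_mul, zero_div]
  · intro k A hA i
    obtain ⟨t, -, rfl⟩ := Finset.mem_image.mp hA
    exact ⟨cf t i, M_mulVec (hψ k) (cf t) i⟩
end

section
/- Suppose ℂ^n admits μ mutually unbiased bases. Then the complex dimension count μ(n-1) + 1 ≤ n² holds; equivalently μ ≤ n+1. (The subspaces H_k of traceless matrices diagonal in each basis B_k are pairwise trace-orthogonal subspaces of sl_n(ℂ), each of dimension n-1, so μ(n-1) ≤ dim sl_n(ℂ) = n²-1.) -/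
open Matrix BigOperators

private lemma mub_sum_comm4 {α : Type*} [Fintype α] (F : α → α → α → α → ℂ) :
    ∑ a, ∑ b, ∑ i, ∑ j, F a b i j = ∑ i, ∑ j, ∑ a, ∑ b, F a b i j := by
  refine (Finset.sum_congr rfl fun a _ => Finset.sum_comm).trans ?_
  rw [Finset.sum_comm]
  refine Finset.sum_congr rfl fun i _ => ?_
  exact (Finset.sum_congr rfl fun a _ => Finset.sum_comm).trans Finset.sum_comm

private lemma mub_keysum {α : Type*} [Fintype α] (x y : α → ℂ) (p q r s : α → α → ℂ) :
    ∑ a, ∑ b, (∑ i, x i * (p i a * q i b)) * (∑ j, y j * (r j a * s j b))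
    = ∑ i, ∑ j, (x i * y j) * ((∑ a, p i a * r j a) * (∑ b, q i b * s j b)) := by
  calc ∑ a, ∑ b, (∑ i, x i * (p i a * q i b)) * (∑ j, y j * (r j a * s j b))
      = ∑ a, ∑ b, ∑ i, ∑ j, (x i * (p i a * q i b)) * (y j * (r j a * s j b)) := by
        refine Finset.sum_congr rfl fun a _ => Finset.sum_congr rfl fun b _ => ?_
        rw [Finset.sum_mul_sum]
    _ = ∑ i, ∑ j, ∑ a, ∑ b, (x i * (p i a * q i b)) * (y j * (r j a * s j b)) :=
        mub_sum_comm4 (fun a b i j => (x i * (p i a * q i b)) * (y j * (r j a * s j b)))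
    _ = ∑ i, ∑ j, (x i * y j) * ((∑ a, p i a * r j a) * (∑ b, q i b * s j b)) := by
        refine Finset.sum_congr rfl fun i _ => Finset.sum_congr rfl fun j _ => ?_
        rw [Finset.sum_mul_sum, Finset.mul_sum]
        refine Finset.sum_congr rfl fun a _ => ?_
        rw [Finset.mul_sum]
        exact Finset.sum_congr rfl fun b _ => by ring

set_option maxHeartbeats 1000000 in
/-- if ℂ^n admits μ mutually unbiased bases (n ≥ 2), then
μ(n-1) + 1 ≤ n²; equivalently μ ≤ n + 1. -/
theorem stmt_17 (n μ : ℕ) (hn : 2 ≤ n)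
    (ψ : Fin μ → Fin n → Fin n → ℂ)
    (hψ : ∀ k i j, ∑ x, (starRingEnd ℂ) (ψ k i x) * ψ k j x = if i = j then 1 else 0)
    (hmub : ∀ k l, k ≠ l → ∀ i j,
      ‖∑ x, (starRingEnd ℂ) (ψ k i x) * ψ l j x‖ ^ 2 = 1 / n) :
    μ * (n - 1) + 1 ≤ n ^ 2 ∧ μ ≤ n + 1 := by
  classical
  have hn0 : n ≠ 0 := by omega
  have hnC : (n : ℂ) ≠ 0 := Nat.cast_ne_zero.mpr hn0
  set ω : ℂ := Complex.exp (2 * Real.pi * Complex.I / n) with hωdef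
  have hprim : IsPrimitiveRoot ω n := Complex.isPrimitiveRoot_exp n hn0
  have hω1 : ω ^ n = 1 := hprim.pow_eq_one
  have hων : ω ≠ 0 := hprim.ne_zero hn0
  have hgeom : ∀ ζ : ℂ, ζ ^ n = 1 → ζ ≠ 1 → ∑ i : Fin n, ζ ^ (i : ℕ) = 0 := by
    intro ζ h1 h2
    rw [Fin.sum_univ_eq_sum_range (fun i => ζ ^ i) n, geom_sum_eq h2, h1, sub_self, zero_div]
  have hconj1 : (starRingEnd ℂ) ω * ω = 1 := by
    rw [hωdef, ← Complex.exp_conj, ← Complex.exp_add, show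
      (starRingEnd ℂ) (2 * (Real.pi:ℂ) * Complex.I / n) + 2 * (Real.pi:ℂ) * Complex.I / n = 0 by
        simp [map_div₀, Complex.conj_I, map_ofNat]; ring]
    exact Complex.exp_zero
  have hconj : (starRingEnd ℂ) ω = ω ^ (n - 1) := by
    have h2 : ω ^ (n - 1) * ω = 1 := by
      rw [← pow_succ, Nat.sub_add_cancel (by omega)]; exact hω1
    exact mul_right_cancel₀ hων (hconj1.trans h2.symm)
  have hconjpow : ∀ m : ℕ, (starRingEnd ℂ) (ω ^ m) = ω ^ (m * (n - 1)) := fun m => by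
    rw [map_pow, hconj, ← pow_mul, Nat.mul_comm]
  have hsum0 : ∀ m : ℕ, 0 < m → m < n → ∑ i : Fin n, ω ^ ((i : ℕ) * m) = 0 := by
    intro m h1 h2
    have he : ∀ i : Fin n, ω ^ ((i : ℕ) * m) = (ω ^ m) ^ (i : ℕ) := fun i => by
      rw [← pow_mul, Nat.mul_comm]
    simp_rw [he]
    exact hgeom _ (by rw [← pow_mul, Nat.mul_comm, pow_mul, hω1, one_pow])
      (hprim.pow_ne_one_of_pos_of_lt h1.ne' h2)
  -- normalization constant
  set c : ℂ := ((Real.sqrt n : ℝ) : ℂ)⁻¹ with hcdef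
  have hcconj : (starRingEnd ℂ) c = c := by
    rw [hcdef, map_inv₀, Complex.conj_ofReal]
  have hc2 : c * c = (n : ℂ)⁻¹ := by
    rw [hcdef, ← mul_inv]
    congr 1
    rw [← Complex.ofReal_mul, Real.mul_self_sqrt (Nat.cast_nonneg n)]
    norm_num
  -- the vectors
  set v : (Fin μ × Fin (n - 1)) ⊕ Unit → EuclideanSpace ℂ (Fin n × Fin n) := fun x =>
    match x with
    | Sum.inl (k, t) => WithLp.toLp 2 fun p : Fin n × Fin n =>
        c * ∑ i : Fin n, ω ^ ((i : ℕ) * ((t : ℕ) + 1)) * (ψ k i p.1 * (starRingEnd ℂ) (ψ k i p.2))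
    | Sum.inr _ => WithLp.toLp 2 fun p : Fin n × Fin n => c * (if p.1 = p.2 then 1 else 0)
    with hvdef
  -- auxiliary scalar sum facts
  have hsum0' : ∀ m : ℕ, ω ^ m ≠ 1 → ∑ i : Fin n, ω ^ ((i : ℕ) * m) = 0 := by
    intro m hm
    have he : ∀ i : Fin n, ω ^ ((i : ℕ) * m) = (ω ^ m) ^ (i : ℕ) := fun i => by
      rw [← pow_mul, Nat.mul_comm]
    simp_rw [he]
    exact hgeom _ (by rw [← pow_mul, Nat.mul_comm, pow_mul, hω1, one_pow]) hm
  have hlt : ∀ t : Fin (n - 1), 0 < (t : ℕ) + 1 ∧ (t : ℕ) + 1 < n := by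
    intro t
    have := t.isLt
    omega
  have hsum0 : ∀ t : Fin (n - 1), ∑ i : Fin n, ω ^ ((i : ℕ) * ((t : ℕ) + 1)) = 0 := by
    intro t
    exact hsum0' _ (hprim.pow_ne_one_of_pos_of_lt (hlt t).1.ne' (hlt t).2)
  have hdiag : ∀ (m : ℕ) (i : Fin n),
      ω ^ ((i : ℕ) * m * (n - 1)) * ω ^ ((i : ℕ) * m) = 1 := by
    intro m i
    rw [← pow_add, show (i : ℕ) * m * (n - 1) + (i : ℕ) * m = ((i : ℕ) * m) * ((n - 1) + 1) from
      (Nat.mul_succ _ _).symm, Nat.sub_add_cancel (by omega), Nat.mul_comm ((i:ℕ)*m) n,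
      pow_mul, hω1, one_pow]
  -- conjugated orthonormality
  have hψ' : ∀ (k : Fin μ) (i j : Fin n),
      ∑ b, ψ k i b * (starRingEnd ℂ) (ψ k j b) = if i = j then 1 else 0 := by
    intro k i j
    have h := congrArg (starRingEnd ℂ) (hψ k i j)
    rw [map_sum] at h
    simp only [_root_.map_mul, Complex.conj_conj] at h
    rwa [show (starRingEnd ℂ) (if i = j then (1:ℂ) else 0) = if i = j then 1 else 0 from by
      split <;> simp] at h
  -- the mub relation as a complex identity
  have hcc : ∀ (k l : Fin μ), k ≠ l → ∀ i j : Fin n,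
      (∑ a, (starRingEnd ℂ) (ψ k i a) * ψ l j a) * (∑ b, ψ k i b * (starRingEnd ℂ) (ψ l j b))
      = (n : ℂ)⁻¹ := by
    intro k l hkl i j
    have h1 : (∑ b, ψ k i b * (starRingEnd ℂ) (ψ l j b))
        = (starRingEnd ℂ) (∑ a, (starRingEnd ℂ) (ψ k i a) * ψ l j a) := by
      rw [map_sum]
      exact Finset.sum_congr rfl fun b _ => by rw [_root_.map_mul, Complex.conj_conj]
    rw [h1, Complex.mul_conj, ← Complex.sq_norm, hmub k l hkl i j]
    push_cast
    rw [one_div]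
  -- pull out normalization constants
  have hpull : ∀ (A B : Fin n → Fin n → ℂ),
      ∑ a, ∑ b, (c * A a b) * (c * B a b) = (c * c) * ∑ a, ∑ b, A a b * B a b := by
    intro A B
    rw [Finset.mul_sum]
    refine Finset.sum_congr rfl fun a _ => ?_
    rw [Finset.mul_sum]
    exact Finset.sum_congr rfl fun b _ => by ring
  -- inner product expansion
  have hip : ∀ x y : (Fin μ × Fin (n - 1)) ⊕ Unit,
      (inner ℂ (v x) (v y) : ℂ) = ∑ a : Fin n, ∑ b : Fin n,
        (starRingEnd ℂ) (v x (a, b)) * v y (a, b) := by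
    intro x y
    rw [PiLp.inner_apply]
    simp only [RCLike.inner_apply']
    rw [Fintype.sum_prod_type]
  have hv1 : ∀ (k : Fin μ) (t : Fin (n - 1)) (a b : Fin n),
      v (Sum.inl (k, t)) (a, b)
      = c * ∑ i : Fin n, ω ^ ((i : ℕ) * ((t : ℕ) + 1)) * (ψ k i a * (starRingEnd ℂ) (ψ k i b)) :=
    fun k t a b => rfl
  have hv2 : ∀ (u : Unit) (a b : Fin n),
      v (Sum.inr u) (a, b) = c * (if a = b then 1 else 0) := fun u a b => rfl
  have hconjv : ∀ (k : Fin μ) (t : Fin (n - 1)) (a b : Fin n),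
      (starRingEnd ℂ) (c * ∑ i : Fin n, ω ^ ((i : ℕ) * ((t : ℕ) + 1)) *
          (ψ k i a * (starRingEnd ℂ) (ψ k i b)))
      = c * ∑ i : Fin n, (starRingEnd ℂ) (ω ^ ((i : ℕ) * ((t : ℕ) + 1))) *
          ((starRingEnd ℂ) (ψ k i a) * ψ k i b) := by
    intro k t a b
    rw [_root_.map_mul, hcconj, map_sum]
    refine congrArg _ (Finset.sum_congr rfl fun i _ => ?_)
    rw [_root_.map_mul, _root_.map_mul, Complex.conj_conj]
  have hconjite : ∀ a b : Fin n,
      (starRingEnd ℂ) (c * (if a = b then (1 : ℂ) else 0)) = c * (if a = b then 1 else 0) := by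
    intro a b
    rw [_root_.map_mul, hcconj]
    congr 1
    split <;> simp
  have hortho : Orthonormal ℂ v := by
    rw [orthonormal_iff_ite]
    rintro (⟨k, t⟩ | u) (⟨l, s⟩ | u')
    · -- inl / inl
      rw [show (inner ℂ (v (Sum.inl (k,t))) (v (Sum.inl (l,s))) : ℂ) = _ from hip (Sum.inl (k,t)) (Sum.inl (l,s))]
      simp only [hv1, hconjv]
      rw [hpull, mub_keysum]
      by_cases hkl : k = l
      · subst hkl
        simp only [hψ, hψ']
        simp only [ite_mul, one_mul, zero_mul, mul_ite, mul_one, mul_zero,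
          Finset.sum_ite_eq, Finset.mem_univ, if_true]
        simp only [hconjpow]
        by_cases hts : t = s
        · subst hts
          simp only [hdiag]
          rw [Finset.sum_const, Finset.card_univ, Fintype.card_fin, nsmul_eq_mul, mul_one,
            hc2, inv_mul_cancel₀ hnC]
          simp
        · have hM : ω ^ (((t : ℕ) + 1) * (n - 1) + ((s : ℕ) + 1)) ≠ 1 := by
            intro h
            have h2 : ω ^ ((((t : ℕ) + 1) * (n - 1) + ((s : ℕ) + 1)) + ((t : ℕ) + 1))
                = ω ^ ((t : ℕ) + 1) := by rw [pow_add, h, one_mul]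
            have h4 : ((t : ℕ) + 1) * (n - 1) + ((t : ℕ) + 1) = ((t : ℕ) + 1) * n := by
              have hx : n - 1 + 1 = n := by omega
              calc ((t : ℕ) + 1) * (n - 1) + ((t : ℕ) + 1)
                  = ((t : ℕ) + 1) * ((n - 1) + 1) := by ring
                _ = ((t : ℕ) + 1) * n := by rw [hx]
            have h3 : ((((t : ℕ) + 1) * (n - 1) + ((s : ℕ) + 1)) + ((t : ℕ) + 1))
                = ((t : ℕ) + 1) * n + ((s : ℕ) + 1) := by
              rw [show (((t : ℕ) + 1) * (n - 1) + ((s : ℕ) + 1)) + ((t : ℕ) + 1)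
                = (((t : ℕ) + 1) * (n - 1) + ((t : ℕ) + 1)) + ((s : ℕ) + 1) from by ring, h4]
            rw [h3, pow_add, pow_mul', hω1, one_pow, one_mul] at h2
            have h5 := hprim.pow_inj (hlt s).2 (hlt t).2 h2
            exact hts (Fin.val_injective (show (t : ℕ) = (s : ℕ) by omega))
          have key : ∀ i : Fin n, ω ^ ((i : ℕ) * ((t : ℕ) + 1) * (n - 1)) *
              ω ^ ((i : ℕ) * ((s : ℕ) + 1))
              = ω ^ ((i : ℕ) * (((t : ℕ) + 1) * (n - 1) + ((s : ℕ) + 1))) := by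
            intro i
            rw [← pow_add]
            congr 1
            ring
          simp only [key]
          rw [hsum0' _ hM, mul_zero]
          simp [hts]
      · simp only [hcc k l hkl]
        have hz : ∀ i : Fin n, ∑ j : Fin n,
            ((starRingEnd ℂ) (ω ^ ((i : ℕ) * ((t : ℕ) + 1))) * ω ^ ((j : ℕ) * ((s : ℕ) + 1)))
              * (n : ℂ)⁻¹ = 0 := by
          intro i
          rw [← Finset.sum_mul, ← Finset.mul_sum, hsum0 s, mul_zero, zero_mul]
        simp only [hz, Finset.sum_const_zero, mul_zero]
        simp [hkl]
    · -- inl / inr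
      rw [show (inner ℂ (v (Sum.inl (k, t))) (v (Sum.inr u')) : ℂ) = _ from hip (Sum.inl (k, t)) (Sum.inr u')]
      simp only [hv1, hv2, hconjv]
      rw [hpull]
      simp only [mul_ite, mul_one, mul_zero, Finset.sum_ite_eq, Finset.mem_univ, if_true]
      rw [Finset.sum_comm]
      simp only [hconjpow]
      have he : ∀ i : Fin n, (i : ℕ) * ((t : ℕ) + 1) * (n - 1)
          = (i : ℕ) * (((t : ℕ) + 1) * (n - 1)) := fun i => by ring
      simp only [he]
      have hrow : ∀ i : Fin n, ∑ a : Fin n, ω ^ ((i : ℕ) * (((t : ℕ) + 1) * (n - 1))) *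
          ((starRingEnd ℂ) (ψ k i a) * ψ k i a)
          = ω ^ ((i : ℕ) * (((t : ℕ) + 1) * (n - 1))) := by
        intro i
        rw [← Finset.mul_sum, hψ k i i, if_pos rfl, mul_one]
      simp only [hrow]
      have hne : ω ^ (((t : ℕ) + 1) * (n - 1)) ≠ 1 := by
        intro h
        have h3 : (starRingEnd ℂ) (ω ^ ((t : ℕ) + 1)) = 1 := by rw [hconjpow, h]
        have h4 : ω ^ ((t : ℕ) + 1) = 1 := by
          have h5 := congrArg (starRingEnd ℂ) h3
          rwa [Complex.conj_conj, _root_.map_one] at h5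
        exact hprim.pow_ne_one_of_pos_of_lt (hlt t).1.ne' (hlt t).2 h4
      rw [hsum0' _ hne, mul_zero]
      simp
    · -- inr / inl
      rw [show (inner ℂ (v (Sum.inr u)) (v (Sum.inl (l, s))) : ℂ) = _ from hip (Sum.inr u) (Sum.inl (l, s))]
      simp only [hv1, hv2, hconjite]
      rw [hpull]
      simp only [ite_mul, one_mul, zero_mul, Finset.sum_ite_eq, Finset.mem_univ, if_true]
      rw [Finset.sum_comm]
      have hrow : ∀ i : Fin n, ∑ a : Fin n, ω ^ ((i : ℕ) * ((s : ℕ) + 1)) *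
          (ψ l i a * (starRingEnd ℂ) (ψ l i a)) = ω ^ ((i : ℕ) * ((s : ℕ) + 1)) := by
        intro i
        rw [← Finset.mul_sum, hψ' l i i, if_pos rfl, mul_one]
      simp only [hrow]
      rw [hsum0 s, mul_zero]
      simp
    · -- inr / inr
      rw [show (inner ℂ (v (Sum.inr u)) (v (Sum.inr u')) : ℂ) = _ from hip (Sum.inr u) (Sum.inr u')]
      simp only [hv2, hconjite]
      rw [hpull]
      have hid : ∑ a : Fin n, ∑ b : Fin n,
          (if a = b then (1 : ℂ) else 0) * (if a = b then 1 else 0) = (n : ℂ) := by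
        simp [Finset.sum_ite_eq]
      rw [hid, hc2, inv_mul_cancel₀ hnC]
      simp
  -- dimension count
  have hli : LinearIndependent ℂ v := hortho.linearIndependent
  have hcard : Fintype.card ((Fin μ × Fin (n - 1)) ⊕ Unit)
      ≤ Module.finrank ℂ (EuclideanSpace ℂ (Fin n × Fin n)) := hli.fintype_card_le_finrank
  rw [finrank_euclideanSpace] at hcard
  simp only [Fintype.card_sum, Fintype.card_prod, Fintype.card_fin, Fintype.card_unit,
    Fintype.card_prod] at hcard
  have h1 : μ * (n - 1) + 1 ≤ n ^ 2 := by
    rw [sq]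
    exact hcard
  refine ⟨h1, ?_⟩
  have hfac : (n + 1) * (n - 1) + 1 = n ^ 2 := by
    obtain ⟨m, rfl⟩ : ∃ m, n = m + 2 := ⟨n - 2, by omega⟩
    show (m + 2 + 1) * (m + 2 - 1) + 1 = (m + 2) ^ 2
    norm_num
    ring
  have hμ : μ * (n - 1) ≤ (n + 1) * (n - 1) := by
    have := h1
    rw [← hfac] at this
    exact Nat.le_of_add_le_add_right this
  exact Nat.le_of_mul_le_mul_right hμ (by omega : 0 < n - 1)
end
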